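/- arXiv:0807.4654 — 2 statements merged into one kernel-verified Lean document; each statement's English description precedes it below -/
import Mathlib

section
/- Let p, q ≥ 1, S(x) = Σ_{α=1}^p x_α² - Σ_{μ=p+1}^{p+q} x_μ², S₁(x) = Σ_{α=1}^p x_α², S₂(x) = Σ_{μ=p+1}^{p+q} x_μ², Δ the indefinite Laplacian Σ∂²_{x_α} - Σ∂²_{x_μ}. Let P₁ be a harmonic polynomial of degree k in x₁,…,x_p and P₂ a harmonic polynomial of degree m in x_{p+1},…,x_{p+q}. If α, β, γ ∈ ℝ satisfy (p+q)/2 + γ - 1 + 2α + 2β + k + m = 0, α(p/2 + α - 1 + k) = 0, and β(q/2 + β - 1 + m) = 0, then ψ := P₁ P₂ S₁^α S₂^β S^γ satisfies Δψ = 0 on the region where S₁ ≠ 0, S₂ ≠ 0, and S > 0. -/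
open Real

/-- Partial derivative in the `j`-th coordinate direction. -/
noncomputable def pd {n : ℕ} (j : Fin n) (f : (Fin n → ℝ) → ℝ) : (Fin n → ℝ) → ℝ :=
  fun x => fderiv ℝ f x (Pi.single j 1)

/-- The indefinite Laplacian of signature `(p,q)`. -/
noncomputable def indefLap (p q : ℕ) (f : (Fin (p + q) → ℝ) → ℝ) : (Fin (p + q) → ℝ) → ℝ :=
  fun x => ∑ j : Fin (p + q), (if (j : ℕ) < p then (1 : ℝ) else -1) * pd j (pd j f) x

/-- `S(x) = Σ_{α≤p} x_α² - Σ_{μ>p} x_μ²`. -/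
noncomputable def qform (p q : ℕ) (x : Fin (p + q) → ℝ) : ℝ :=
  ∑ j : Fin (p + q), (if (j : ℕ) < p then (1 : ℝ) else -1) * x j ^ 2

/-- `S₁(x) = Σ_{α≤p} x_α²`. -/
noncomputable def qform1 (p q : ℕ) (x : Fin (p + q) → ℝ) : ℝ :=
  ∑ i : Fin p, x (Fin.castAdd q i) ^ 2

/-- `S₂(x) = Σ_{μ>p} x_μ²`. -/
noncomputable def qform2 (p q : ℕ) (x : Fin (p + q) → ℝ) : ℝ :=
  ∑ i : Fin q, x (Fin.natAdd p i) ^ 2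

/-!
Write `ψ = P₁ · (P₂ S₂^β) · S₁^α · S^γ`. In the variables `x'` of the first block the factor
`P₂ S₂^β` is constant and `∂S = ∂S₁ = 2x'`, so the functions `P · P₂ S₂^β · S₁^a · S^g` (`P` a
polynomial in `x'`) are closed under `∂/∂x'ᵢ`: each derivative adds terms `Xᵢ P` with the exponent
of `S₁` or of `S` lowered by one. Summing the second derivatives, Euler's identity and `Δ P₁ = 0` give
`Δ₁ψ = 4α(p/2 + α - 1 + k) ψ/S₁ + 4γ(p/2 + k + 2α) ψ/S + 4γ(γ - 1) S₁ ψ/S²`,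
and likewise for the second block with the sign of `S` reversed. In `Δψ = Δ₁ψ - Δ₂ψ` the first
terms vanish by the conditions on `α` and `β`, and as `S₁ - S₂ = S` what remains is
`4γ((p + q)/2 + γ - 1 + 2α + 2β + k + m) ψ/S = 0`.
-/

open MvPolynomial Filter Topology

theorem MvPolynomial.hasFDerivAt_eval {𝕜 σ : Type*} [NontriviallyNormedField 𝕜] [Fintype σ]
    (Q : MvPolynomial σ 𝕜) (u : σ → 𝕜) :
    HasFDerivAt (fun v => eval v Q)
      (∑ i, eval u (pderiv i Q) • (ContinuousLinearMap.proj i : (σ → 𝕜) →L[𝕜] 𝕜)) u := by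
  classical
  induction Q using MvPolynomial.induction_on with
  | C a =>
    simp only [eval_C]
    refine (hasFDerivAt_const (𝕜 := 𝕜) a u).congr_fderiv ?_
    ext v
    simp
  | add P Q hP hQ =>
    simp only [map_add]
    refine (hP.fun_add hQ).congr_fderiv ?_
    ext v
    simp [add_mul, Finset.sum_add_distrib]
  | mul_X P i hP =>
    simp only [eval_mul, eval_X]
    refine (hP.fun_mul (hasFDerivAt_apply i u)).congr_fderiv ?_
    ext v
    simp [pderiv_X, Pi.single_apply, add_mul, Finset.sum_add_distrib, Finset.mul_sum,
      apply_ite (eval u), ite_mul, mul_assoc]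

theorem MvPolynomial.sum_pderiv_X_mul {R σ : Type*} [CommSemiring R] [Fintype σ]
    (Q : MvPolynomial σ R) :
    ∑ i, pderiv i (X i * Q) = Fintype.card σ • Q + ∑ i, X i * pderiv i Q := by
  simp [Finset.sum_add_distrib, add_comm]

section PartialDerivatives

variable {n : ℕ} {f g : (Fin n → ℝ) → ℝ} {z : Fin n → ℝ} (j : Fin n)

theorem pd_add (hf : DifferentiableAt ℝ f z) (hg : DifferentiableAt ℝ g z) :
    pd j (fun z => f z + g z) z = pd j f z + pd j g z := by
  simp [pd, fderiv_fun_add hf hg]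

theorem pd_sub (hf : DifferentiableAt ℝ f z) (hg : DifferentiableAt ℝ g z) :
    pd j (fun z => f z - g z) z = pd j f z - pd j g z := by
  simp [pd, fderiv_fun_sub hf hg]

theorem pd_const_mul (c : ℝ) (hf : DifferentiableAt ℝ f z) :
    pd j (fun z => c * f z) z = c * pd j f z := by
  simp [pd, fderiv_const_mul hf]

theorem pd_mul (hf : DifferentiableAt ℝ f z) (hg : DifferentiableAt ℝ g z) :
    pd j (fun z => f z * g z) z = pd j f z * g z + f z * pd j g z := by
  simp [pd, fderiv_fun_mul hf hg]; ring

theorem pd_rpow_const (hf : DifferentiableAt ℝ f z) (hz : f z ≠ 0) (a : ℝ) :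
    pd j (fun z => f z ^ a) z = a * f z ^ (a - 1) * pd j f z := by
  simp [pd, (hf.hasFDerivAt.rpow_const (p := a) (Or.inl hz)).fderiv, mul_assoc]

theorem Filter.EventuallyEq.pd_eq (h : f =ᶠ[𝓝 z] g) : pd j f z = pd j g z := by
  simp only [pd, h.fderiv_eq]

theorem pd_eval (Q : MvPolynomial (Fin n) ℝ) (w : Fin n → ℝ) :
    pd j (fun w => eval w Q) w = eval w (pderiv j Q) := by
  simp [pd, (hasFDerivAt_eval Q w).fderiv, Pi.single_apply]

theorem pd_precomp {N : ℕ} (e : Fin n → Fin N) {F : (Fin n → ℝ) → ℝ} {y : Fin N → ℝ}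
    (hF : DifferentiableAt ℝ F (y ∘ e)) (j : Fin N) :
    pd j (fun y => F (y ∘ e)) y = fderiv ℝ F (y ∘ e) (Pi.single j 1 ∘ e) := by
  let L : (Fin N → ℝ) →L[ℝ] (Fin n → ℝ) := ContinuousLinearMap.pi fun i => .proj (e i)
  exact congrArg (· (Pi.single j 1)) ((hF.hasFDerivAt.comp y L.hasFDerivAt).fderiv)

end PartialDerivatives

section Block

variable {N n : ℕ} (e : Fin n → Fin N)

noncomputable def blockSumSq (z : Fin N → ℝ) : ℝ := ∑ i, z (e i) ^ 2

noncomputable def blockPsi (Q : MvPolynomial (Fin n) ℝ) (R S : (Fin N → ℝ) → ℝ) (a g : ℝ)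
    (z : Fin N → ℝ) : ℝ :=
  eval (z ∘ e) Q * R z * blockSumSq e z ^ a * S z ^ g

theorem differentiableAt_eval_comp (Q : MvPolynomial (Fin n) ℝ) (z : Fin N → ℝ) :
    DifferentiableAt ℝ (fun z : Fin N → ℝ => eval (z ∘ e) Q) z :=
  DifferentiableAt.comp (g := fun w => eval w Q) z (hasFDerivAt_eval Q (z ∘ e)).differentiableAt
    (differentiableAt_pi.2 fun i => differentiableAt_apply (e i) z)

theorem pd_eval_comp_self {e} (he : Function.Injective e) (Q : MvPolynomial (Fin n) ℝ)
    (z : Fin N → ℝ) (i : Fin n) :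
    pd (e i) (fun z => eval (z ∘ e) Q) z = eval (z ∘ e) (pderiv i Q) := by
  have hsingle : Pi.single (e i) (1 : ℝ) ∘ e = Pi.single i 1 := by
    ext k; simp [Pi.single_apply, he.eq_iff]
  rw [pd_precomp e (F := fun w => eval w Q) (hasFDerivAt_eval Q _).differentiableAt, hsingle]
  exact pd_eval i Q _

theorem pd_eval_comp_of_notMem_range {j : Fin N} (hj : j ∉ Set.range e)
    (Q : MvPolynomial (Fin n) ℝ) (z : Fin N → ℝ) :
    pd j (fun z => eval (z ∘ e) Q) z = 0 := by
  have hsingle : Pi.single j (1 : ℝ) ∘ e = 0 := by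
    ext k; simpa [Pi.single_apply] using fun h => hj ⟨k, h⟩
  rw [pd_precomp e (F := fun w => eval w Q) (hasFDerivAt_eval Q _).differentiableAt, hsingle,
    map_zero]

theorem blockSumSq_eq_eval : blockSumSq e = fun z => eval (z ∘ e) (∑ i, X i ^ 2) := by
  ext z; simp [blockSumSq]

theorem differentiableAt_blockSumSq (z : Fin N → ℝ) : DifferentiableAt ℝ (blockSumSq e) z := by
  rw [blockSumSq_eq_eval]; exact differentiableAt_eval_comp e _ z

theorem pd_blockSumSq_self {e} (he : Function.Injective e) (z : Fin N → ℝ) (i : Fin n) :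
    pd (e i) (blockSumSq e) z = 2 * z (e i) := by
  rw [blockSumSq_eq_eval, pd_eval_comp_self he]
  simp [pderiv_X, Pi.single_apply]

theorem pd_blockSumSq_of_notMem_range {j : Fin N} (hj : j ∉ Set.range e) (z : Fin N → ℝ) :
    pd j (blockSumSq e) z = 0 := by
  rw [blockSumSq_eq_eval, pd_eval_comp_of_notMem_range e hj]

theorem pd_eval_comp_mul_blockSumSq_rpow_of_notMem_range {j : Fin N} (hj : j ∉ Set.range e)
    (Q : MvPolynomial (Fin n) ℝ) (a : ℝ) {z : Fin N → ℝ} (hz : blockSumSq e z ≠ 0) :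
    pd j (fun z => eval (z ∘ e) Q * blockSumSq e z ^ a) z = 0 := by
  rw [pd_mul _ (differentiableAt_eval_comp e Q z)
      ((differentiableAt_blockSumSq e z).rpow_const (Or.inl hz)),
    pd_eval_comp_of_notMem_range e hj, pd_rpow_const _ (differentiableAt_blockSumSq e z) hz,
    pd_blockSumSq_of_notMem_range e hj]
  ring

/-- At `z`, the factor `R` has no derivative in the block coordinates `z ∘ e` and the form `S` has
that of `σ |z ∘ e|²`. Holding near a point, this makes the functions `blockPsi e Q R S a g` closed
under `∂/∂z_{e i}` there. -/
structure BlockRegularAt (σ : ℝ) (R S : (Fin N → ℝ) → ℝ) (z : Fin N → ℝ) : Prop where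
  differentiableAt_factor : DifferentiableAt ℝ R z
  differentiableAt_form : DifferentiableAt ℝ S z
  pd_factor : ∀ i, pd (e i) R z = 0
  pd_form : ∀ i, pd (e i) S z = 2 * σ * z (e i)
  blockSumSq_ne_zero : blockSumSq e z ≠ 0
  form_ne_zero : S z ≠ 0

variable {e} {σ : ℝ} {R S : (Fin N → ℝ) → ℝ} {z : Fin N → ℝ}

theorem BlockRegularAt.differentiableAt_blockPsi (h : BlockRegularAt e σ R S z)
    (Q : MvPolynomial (Fin n) ℝ) (a g : ℝ) : DifferentiableAt ℝ (blockPsi e Q R S a g) z :=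
  (((differentiableAt_eval_comp e Q z).mul h.differentiableAt_factor).mul
    ((differentiableAt_blockSumSq e z).rpow_const (Or.inl h.blockSumSq_ne_zero))).mul
    (h.differentiableAt_form.rpow_const (Or.inl h.form_ne_zero))

theorem BlockRegularAt.pd_blockPsi (he : Function.Injective e) (h : BlockRegularAt e σ R S z)
    (Q : MvPolynomial (Fin n) ℝ) (a g : ℝ) (i : Fin n) :
    pd (e i) (blockPsi e Q R S a g) z =
      blockPsi e (pderiv i Q) R S a g z + 2 * a * blockPsi e (X i * Q) R S (a - 1) g z
        + 2 * σ * g * blockPsi e (X i * Q) R S a (g - 1) z := by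
  have hQ := differentiableAt_eval_comp e Q z
  have hT := differentiableAt_blockSumSq e z
  have hTa := hT.rpow_const (p := a) (Or.inl h.blockSumSq_ne_zero)
  unfold blockPsi
  rw [pd_mul _ ((hQ.fun_mul h.differentiableAt_factor).fun_mul hTa)
      (h.differentiableAt_form.rpow_const (Or.inl h.form_ne_zero)),
    pd_mul _ (hQ.fun_mul h.differentiableAt_factor) hTa, pd_mul _ hQ h.differentiableAt_factor,
    pd_rpow_const _ hT h.blockSumSq_ne_zero, pd_rpow_const _ h.differentiableAt_form h.form_ne_zero,
    pd_eval_comp_self he, pd_blockSumSq_self he, h.pd_factor, h.pd_form]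
  simp only [eval_mul, eval_X, Function.comp_apply]
  ring

theorem pd_pd_blockPsi (he : Function.Injective e) {y : Fin N → ℝ}
    (h : ∀ᶠ z in 𝓝 y, BlockRegularAt e σ R S z) (Q : MvPolynomial (Fin n) ℝ) (a g : ℝ) (i : Fin n) :
    pd (e i) (pd (e i) (blockPsi e Q R S a g)) y =
      pd (e i) (blockPsi e (pderiv i Q) R S a g) y
        + 2 * a * pd (e i) (blockPsi e (X i * Q) R S (a - 1) g) y
        + 2 * σ * g * pd (e i) (blockPsi e (X i * Q) R S a (g - 1)) y := by
  have hd := h.self_of_nhds.differentiableAt_blockPsi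
  rw [Filter.EventuallyEq.pd_eq _ (h.mono fun z hz => hz.pd_blockPsi he Q a g i),
    pd_add _ ((hd _ _ _).fun_add ((hd _ _ _).const_mul _)) ((hd _ _ _).const_mul _),
    pd_add _ (hd _ _ _) ((hd _ _ _).const_mul _), pd_const_mul _ _ (hd _ _ _),
    pd_const_mul _ _ (hd _ _ _)]

theorem sum_blockPsi {ι : Type*} (s : Finset ι) (F : ι → MvPolynomial (Fin n) ℝ) (a g : ℝ)
    (z : Fin N → ℝ) :
    ∑ i ∈ s, blockPsi e (F i) R S a g z = blockPsi e (∑ i ∈ s, F i) R S a g z := by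
  simp only [blockPsi, map_sum, Finset.sum_mul]

end Block

section BlockLaplacian

variable {N n : ℕ} {e : Fin n → Fin N} {σ : ℝ} {R S : (Fin N → ℝ) → ℝ} {z : Fin N → ℝ}

theorem blockPsi_zero (a g : ℝ) : blockPsi e 0 R S a g z = 0 := by
  simp [blockPsi]

theorem blockPsi_nsmul (k : ℕ) (Q : MvPolynomial (Fin n) ℝ) (a g : ℝ) :
    blockPsi e (k • Q) R S a g z = k * blockPsi e Q R S a g z := by
  simp [blockPsi, mul_assoc]

theorem blockPsi_sumSq_mul (Q : MvPolynomial (Fin n) ℝ) (a g : ℝ) :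
    blockPsi e ((∑ i, X i ^ 2) * Q) R S a g z = blockSumSq e z * blockPsi e Q R S a g z := by
  simp [blockPsi, blockSumSq]; ring

theorem blockSumSq_mul_blockPsi_sub_one (hz : blockSumSq e z ≠ 0) (Q : MvPolynomial (Fin n) ℝ)
    (a g : ℝ) :
    blockSumSq e z * blockPsi e Q R S (a - 1) g z = blockPsi e Q R S a g z := by
  simp only [blockPsi]
  rw [← sub_add_cancel a 1, Real.rpow_add_one hz, sub_add_cancel]
  ring

theorem sum_pd_pd_blockPsi (he : Function.Injective e) {y : Fin N → ℝ}
    (h : ∀ᶠ z in 𝓝 y, BlockRegularAt e σ R S z) {Q : MvPolynomial (Fin n) ℝ} {k : ℕ}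
    (hQ : Q.IsHomogeneous k) (hΔQ : ∑ i, pderiv i (pderiv i Q) = 0) (a g : ℝ) :
    ∑ i, pd (e i) (pd (e i) (blockPsi e Q R S a g)) y =
      4 * a * (n / 2 + a - 1 + k) * blockPsi e Q R S (a - 1) g y
        + 4 * σ * g * (n / 2 + k + 2 * a) * blockPsi e Q R S a (g - 1) y
        + 4 * σ ^ 2 * g * (g - 1) * blockSumSq e y * blockPsi e Q R S a (g - 1 - 1) y := by
  have hy := h.self_of_nhds
  simp only [pd_pd_blockPsi he h, hy.pd_blockPsi he, mul_add, Finset.sum_add_distrib,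
    ← Finset.mul_sum, sum_blockPsi]
  have hXX : ∑ i, X i * (X i * Q) = (∑ i, X i ^ 2) * Q := by
    simp only [Finset.sum_mul, ← mul_assoc, sq]
  rw [hΔQ, hQ.sum_X_mul_pderiv, sum_pderiv_X_mul, hQ.sum_X_mul_pderiv, hXX, ← add_smul]
  simp only [blockPsi_zero, blockPsi_nsmul, blockPsi_sumSq_mul,
    blockSumSq_mul_blockPsi_sub_one hy.blockSumSq_ne_zero, Fintype.card_fin]
  push_cast
  ring

end BlockLaplacian

section Signature

variable {p q : ℕ}

theorem qform1_eq_blockSumSq : qform1 p q = blockSumSq (Fin.castAdd q) := rfl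

theorem qform2_eq_blockSumSq : qform2 p q = blockSumSq (Fin.natAdd p) := rfl

theorem qform_eq_sub : qform p q = fun z => qform1 p q z - qform2 p q z := by
  ext z
  simp [qform, qform1, qform2, Fin.sum_univ_add, sub_eq_add_neg, ← Finset.sum_neg_distrib]

theorem natAdd_notMem_range_castAdd (i : Fin q) : Fin.natAdd p i ∉ Set.range (Fin.castAdd q) := by
  rintro ⟨j, hj⟩
  have := congrArg Fin.val hj
  simp at this
  omega

theorem castAdd_notMem_range_natAdd (i : Fin p) : Fin.castAdd q i ∉ Set.range (Fin.natAdd p) := by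
  rintro ⟨j, hj⟩
  have := congrArg Fin.val hj
  simp at this
  omega

theorem indefLap_eq_sub (f : (Fin (p + q) → ℝ) → ℝ) (x : Fin (p + q) → ℝ) :
    indefLap p q f x = ∑ i : Fin p, pd (Fin.castAdd q i) (pd (Fin.castAdd q i) f) x
      - ∑ i : Fin q, pd (Fin.natAdd p i) (pd (Fin.natAdd p i) f) x := by
  simp [indefLap, Fin.sum_univ_add, sub_eq_add_neg]

theorem differentiableAt_qform (z : Fin (p + q) → ℝ) : DifferentiableAt ℝ (qform p q) z := by
  rw [qform_eq_sub]
  exact (differentiableAt_blockSumSq _ z).fun_sub (differentiableAt_blockSumSq _ z)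

theorem pd_qform_castAdd (i : Fin p) (z : Fin (p + q) → ℝ) :
    pd (Fin.castAdd q i) (qform p q) z = 2 * z (Fin.castAdd q i) := by
  rw [qform_eq_sub, qform1_eq_blockSumSq, qform2_eq_blockSumSq,
    pd_sub _ (differentiableAt_blockSumSq _ z) (differentiableAt_blockSumSq _ z),
    pd_blockSumSq_self (Fin.castAdd_injective p q),
    pd_blockSumSq_of_notMem_range _ (castAdd_notMem_range_natAdd i), sub_zero]

theorem pd_qform_natAdd (i : Fin q) (z : Fin (p + q) → ℝ) :
    pd (Fin.natAdd p i) (qform p q) z = -(2 * z (Fin.natAdd p i)) := by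
  rw [qform_eq_sub, qform1_eq_blockSumSq, qform2_eq_blockSumSq,
    pd_sub _ (differentiableAt_blockSumSq _ z) (differentiableAt_blockSumSq _ z),
    pd_blockSumSq_self (Fin.natAdd_injective q p),
    pd_blockSumSq_of_notMem_range _ (natAdd_notMem_range_castAdd i), zero_sub]

theorem eventually_qforms_ne_zero {x : Fin (p + q) → ℝ} (h₁ : qform1 p q x ≠ 0)
    (h₂ : qform2 p q x ≠ 0) (h : qform p q x ≠ 0) :
    ∀ᶠ z in 𝓝 x, qform1 p q z ≠ 0 ∧ qform2 p q z ≠ 0 ∧ qform p q z ≠ 0 :=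
  ((differentiableAt_blockSumSq _ x).continuousAt.eventually_ne h₁).and
    (((differentiableAt_blockSumSq _ x).continuousAt.eventually_ne h₂).and
      ((differentiableAt_qform x).continuousAt.eventually_ne h))

theorem blockRegularAt_castAdd (P₂ : MvPolynomial (Fin q) ℝ) (β : ℝ) {z : Fin (p + q) → ℝ}
    (h₁ : qform1 p q z ≠ 0) (h₂ : qform2 p q z ≠ 0) (h : qform p q z ≠ 0) :
    BlockRegularAt (Fin.castAdd q) 1 (fun z => eval (z ∘ Fin.natAdd p) P₂ * qform2 p q z ^ β)
      (qform p q) z where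
  differentiableAt_factor :=
    (differentiableAt_eval_comp _ P₂ z).fun_mul
      ((differentiableAt_blockSumSq _ z).rpow_const (Or.inl h₂))
  differentiableAt_form := differentiableAt_qform z
  pd_factor i := by
    rw [qform2_eq_blockSumSq]
    exact pd_eval_comp_mul_blockSumSq_rpow_of_notMem_range _ (castAdd_notMem_range_natAdd i) P₂ β h₂
  pd_form i := by rw [pd_qform_castAdd]; ring
  blockSumSq_ne_zero := h₁
  form_ne_zero := h

theorem blockRegularAt_natAdd (P₁ : MvPolynomial (Fin p) ℝ) (α : ℝ) {z : Fin (p + q) → ℝ}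
    (h₁ : qform1 p q z ≠ 0) (h₂ : qform2 p q z ≠ 0) (h : qform p q z ≠ 0) :
    BlockRegularAt (Fin.natAdd p) (-1) (fun z => eval (z ∘ Fin.castAdd q) P₁ * qform1 p q z ^ α)
      (qform p q) z where
  differentiableAt_factor :=
    (differentiableAt_eval_comp _ P₁ z).fun_mul
      ((differentiableAt_blockSumSq _ z).rpow_const (Or.inl h₁))
  differentiableAt_form := differentiableAt_qform z
  pd_factor i := by
    rw [qform1_eq_blockSumSq]
    exact pd_eval_comp_mul_blockSumSq_rpow_of_notMem_range _ (natAdd_notMem_range_castAdd i) P₁ α h₁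
  pd_form i := by rw [pd_qform_natAdd]; ring
  blockSumSq_ne_zero := h₂
  form_ne_zero := h

end Signature

theorem rallis_schiffmann_harmonic_general (p q k m : ℕ)
    (P₁ : MvPolynomial (Fin p) ℝ) (P₂ : MvPolynomial (Fin q) ℝ)
    (hP₁hom : P₁.IsHomogeneous k) (hP₂hom : P₂.IsHomogeneous m)
    (hP₁harm : ∑ i : Fin p, MvPolynomial.pderiv i (MvPolynomial.pderiv i P₁) = 0)
    (hP₂harm : ∑ i : Fin q, MvPolynomial.pderiv i (MvPolynomial.pderiv i P₂) = 0)
    (α β γ : ℝ)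
    (h1 : (p + q : ℝ) / 2 + γ - 1 + 2 * α + 2 * β + k + m = 0)
    (h2 : α * ((p : ℝ) / 2 + α - 1 + k) = 0)
    (h3 : β * ((q : ℝ) / 2 + β - 1 + m) = 0) :
    ∀ x : Fin (p + q) → ℝ, qform1 p q x ≠ 0 → qform2 p q x ≠ 0 → 0 < qform p q x →
      indefLap p q (fun y =>
        MvPolynomial.eval (fun i => y (Fin.castAdd q i)) P₁ *
        MvPolynomial.eval (fun i => y (Fin.natAdd p i)) P₂ *
        qform1 p q y ^ α * qform2 p q y ^ β * qform p q y ^ γ) x = 0 := by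
  intro x h₁ h₂ hpos
  have hnear := eventually_qforms_ne_zero h₁ h₂ hpos.ne'
  set R₁ := fun z : Fin (p + q) → ℝ => eval (z ∘ Fin.natAdd p) P₂ * qform2 p q z ^ β
  set R₂ := fun z : Fin (p + q) → ℝ => eval (z ∘ Fin.castAdd q) P₁ * qform1 p q z ^ α
  have hψ₁ : (fun y => eval (fun i => y (Fin.castAdd q i)) P₁ *
      eval (fun i => y (Fin.natAdd p i)) P₂ * qform1 p q y ^ α * qform2 p q y ^ β *
        qform p q y ^ γ) =
      blockPsi (Fin.castAdd q) P₁ R₁ (qform p q) α γ := by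
    ext y; simp only [blockPsi, R₁, qform1_eq_blockSumSq, Function.comp_def]; ring
  have hψ₂ : blockPsi (Fin.castAdd q) P₁ R₁ (qform p q) α γ =
      blockPsi (Fin.natAdd p) P₂ R₂ (qform p q) β γ := by
    ext y; simp only [blockPsi, R₁, R₂, qform1_eq_blockSumSq, qform2_eq_blockSumSq]; ring
  have hSγ :
      qform p q x ^ (γ - 1) = qform p q x ^ (γ - 1 - 1) * (qform1 p q x - qform2 p q x) := by
    rw [← congrFun qform_eq_sub x, ← Real.rpow_add_one hpos.ne', sub_add_cancel]
  rw [hψ₁, indefLap_eq_sub,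
    sum_pd_pd_blockPsi (Fin.castAdd_injective p q)
      (hnear.mono fun z hz => blockRegularAt_castAdd P₂ β hz.1 hz.2.1 hz.2.2) hP₁hom hP₁harm,
    hψ₂, sum_pd_pd_blockPsi (Fin.natAdd_injective q p)
      (hnear.mono fun z hz => blockRegularAt_natAdd P₁ α hz.1 hz.2.1 hz.2.2) hP₂hom hP₂harm]
  simp only [blockPsi, ← qform1_eq_blockSumSq, ← qform2_eq_blockSumSq]
  set A := eval (x ∘ Fin.castAdd q) P₁
  set B := eval (x ∘ Fin.natAdd p) P₂
  linear_combination 4 * A * B * qform1 p q x ^ (α - 1) * qform2 p q x ^ β * qform p q x ^ γ * h2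
    - 4 * A * B * qform1 p q x ^ α * qform2 p q x ^ (β - 1) * qform p q x ^ γ * h3
    + 4 * γ * A * B * qform1 p q x ^ α * qform2 p q x ^ β
      * (qform p q x ^ (γ - 1) * h1 - (γ - 1) * hSγ)

/-- Rallis–Schiffmann harmonicity: under the three algebraic conditions on `α, β, γ`,
the function `ψ = P₁ P₂ S₁^α S₂^β S^γ` is annihilated by the indefinite Laplacian on the
region `S₁ ≠ 0`, `S₂ ≠ 0`, `S > 0`. -/
theorem rallis_schiffmann_harmonic (p q k m : ℕ) (hp : 1 ≤ p) (hq : 1 ≤ q)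
    (P₁ : MvPolynomial (Fin p) ℝ) (P₂ : MvPolynomial (Fin q) ℝ)
    (hP₁hom : P₁.IsHomogeneous k) (hP₂hom : P₂.IsHomogeneous m)
    (hP₁harm : ∑ i : Fin p, MvPolynomial.pderiv i (MvPolynomial.pderiv i P₁) = 0)
    (hP₂harm : ∑ i : Fin q, MvPolynomial.pderiv i (MvPolynomial.pderiv i P₂) = 0)
    (α β γ : ℝ)
    (h1 : (p + q : ℝ) / 2 + γ - 1 + 2 * α + 2 * β + k + m = 0)
    (h2 : α * ((p : ℝ) / 2 + α - 1 + k) = 0)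
    (h3 : β * ((q : ℝ) / 2 + β - 1 + m) = 0) :
    ∀ x : Fin (p + q) → ℝ, qform1 p q x ≠ 0 → qform2 p q x ≠ 0 → 0 < qform p q x →
      indefLap p q (fun y =>
        MvPolynomial.eval (fun i => y (Fin.castAdd q i)) P₁ *
        MvPolynomial.eval (fun i => y (Fin.natAdd p i)) P₂ *
        qform1 p q y ^ α * qform2 p q y ^ β * qform p q y ^ γ) x = 0 :=
  rallis_schiffmann_harmonic_general p q k m P₁ P₂ hP₁hom hP₂hom hP₁harm hP₂harm α β γ h1 h2 h3
end

section
/- Let k ≥ 1 and S(x) = x₁² + x₂² - x₃². On the region {x : S(x) > 0, (x₁,x₂) ≠ 0}, define φ^k_±(x) := (x₁ ∓ i x₂)^{-k} S(x)^{k - 1/2} e^{-π S(x)}. With Ĥ₀ = -2i(x₁∂₂ - x₂∂₁) and Ŷ_± = -(x₁ ± ix₂)∂₃ - x₃(∂₁ ± i∂₂), one has Ĥ₀ φ^k_± = ±2k φ^k_±, Ŷ₋ φ^k_+ = 0, and Ŷ₊ φ^k_- = 0. -/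
open Real Complex

/-- Partial derivative of a complex-valued function in the `j`-th coordinate direction. -/
noncomputable def pdC {n : ℕ} (j : Fin n) (f : (Fin n → ℝ) → ℂ) : (Fin n → ℝ) → ℂ :=
  fun x => fderiv ℝ f x (Pi.single j 1)

/-- `S(x) = x₁² + x₂² - x₃²`. -/
noncomputable def qf3 (x : Fin 3 → ℝ) : ℝ := x 0 ^ 2 + x 1 ^ 2 - x 2 ^ 2

/-- The Rallis–Schiffmann function `φ^k₊(x) = (x₁ - ix₂)^{-k} S(x)^{k-1/2} e^{-πS(x)}`. -/
noncomputable def rsPlus (k : ℕ) : (Fin 3 → ℝ) → ℂ :=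
  fun x => ((x 0 : ℂ) - Complex.I * (x 1 : ℂ)) ^ (-(k : ℤ)) *
    ((qf3 x ^ ((k : ℝ) - 1 / 2) : ℝ) : ℂ) * ((Real.exp (-π * qf3 x) : ℝ) : ℂ)

/-- The Rallis–Schiffmann function `φ^k₋(x) = (x₁ + ix₂)^{-k} S(x)^{k-1/2} e^{-πS(x)}`. -/
noncomputable def rsMinus (k : ℕ) : (Fin 3 → ℝ) → ℂ :=
  fun x => ((x 0 : ℂ) + Complex.I * (x 1 : ℂ)) ^ (-(k : ℤ)) *
    ((qf3 x ^ ((k : ℝ) - 1 / 2) : ℝ) : ℂ) * ((Real.exp (-π * qf3 x) : ℝ) : ℂ)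

/-- `Ĥ₀ = -2i(x₁∂₂ - x₂∂₁)` applied to `φ`. -/
noncomputable def H0op (φ : (Fin 3 → ℝ) → ℂ) : (Fin 3 → ℝ) → ℂ :=
  fun x => -2 * Complex.I * ((x 0 : ℂ) * pdC 1 φ x - (x 1 : ℂ) * pdC 0 φ x)

/-- `Ŷ₊ = -(x₁ + ix₂)∂₃ - x₃(∂₁ + i∂₂)` applied to `φ`. -/
noncomputable def Yplus (φ : (Fin 3 → ℝ) → ℂ) : (Fin 3 → ℝ) → ℂ :=
  fun x => -(((x 0 : ℂ) + Complex.I * (x 1 : ℂ)) * pdC 2 φ x) -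
    (x 2 : ℂ) * (pdC 0 φ x + Complex.I * pdC 1 φ x)

/-- `Ŷ₋ = -(x₁ - ix₂)∂₃ - x₃(∂₁ - i∂₂)` applied to `φ`. -/
noncomputable def Yminus (φ : (Fin 3 → ℝ) → ℂ) : (Fin 3 → ℝ) → ℂ :=
  fun x => -(((x 0 : ℂ) - Complex.I * (x 1 : ℂ)) * pdC 2 φ x) -
    (x 2 : ℂ) * (pdC 0 φ x - Complex.I * pdC 1 φ x)


/-!
Each of `Ĥ₀`, `Ŷ₊`, `Ŷ₋` is, at a fixed point `x`, a `ℂ`-linear combination `D = ∑ cⱼ ∂ⱼ` of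
partial derivatives, so it obeys the Leibniz and chain rules. The coefficients are those of a
vector field generating a rotation (`Ĥ₀`) or a complexified boost (`Ŷ±`) of `O(2,1)`, so `D`
annihilates `S` and hence every function of `S`. On the other factor, `z = x₁ ∓ ix₂` is an
eigenfunction: `Ĥ₀ z = ∓2z`, while `Ŷ∓ z = 0`. Thus `D (z^{-k} h(S)) = -k (Dz / z) z^{-k} h(S)`.
-/

open ContinuousLinearMap

/-- `∑ⱼ cⱼ ∂ⱼ` with coefficients frozen at a point, acting on the derivative there. -/
noncomputable def coordOp {n : ℕ} (c : Fin n → ℂ) : ((Fin n → ℝ) →L[ℝ] ℂ) →ₗ[ℂ] ℂ where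
  toFun L := ∑ j, c j * L (Pi.single j 1)
  map_add' _ _ := by simp only [add_apply, mul_add, Finset.sum_add_distrib]
  map_smul' _ _ := by
    simp only [smul_apply, smul_eq_mul, Finset.mul_sum, RingHom.id_apply, mul_left_comm]

theorem coordOp_apply {n : ℕ} (c : Fin n → ℂ) (L : (Fin n → ℝ) →L[ℝ] ℂ) :
    coordOp c L = ∑ j, c j * L (Pi.single j 1) :=
  rfl

theorem apply_fderiv_zpow_mul_ofReal_comp {E : Type*} [NormedAddCommGroup E] [NormedSpace ℝ E]
    (D : (E →L[ℝ] ℂ) →ₗ[ℂ] ℂ) {z : E → ℂ} {q : E → ℝ} {h : ℝ → ℝ} {x : E} {m : ℤ} {μ : ℂ}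
    (hz : DifferentiableAt ℝ z x) (hzx : z x ≠ 0) (hq : DifferentiableAt ℝ q x)
    (hh : DifferentiableAt ℝ h (q x))
    (hDz : D (fderiv ℝ z x) = μ * z x) (hDq : D (ofRealCLM.comp (fderiv ℝ q x)) = 0) :
    D (fderiv ℝ (fun y => z y ^ m * (h (q y) : ℂ)) x) = m * μ * (z x ^ m * h (q x)) := by
  have hzm := (hasDerivAt_zpow m (z x) (Or.inl hzx)).comp_hasFDerivAt x hz.hasFDerivAt
  have hhq := ofRealCLM.hasFDerivAt.comp x (hh.hasDerivAt.comp_hasFDerivAt x hq.hasFDerivAt)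
  have hprod : HasFDerivAt (fun y => z y ^ m * (h (q y) : ℂ)) _ x := hzm.mul hhq
  rw [hprod.fderiv, comp_smul, ← Complex.coe_smul]
  simp only [map_add, map_smul, smul_eq_mul, hDz, hDq, Function.comp_apply, zpow_sub_one₀ hzx,
    mul_zero, zero_add]
  field_simp

theorem coordOp_fderiv_qf3 (c : Fin 3 → ℂ) (x : Fin 3 → ℝ) :
    coordOp c (ofRealCLM.comp (fderiv ℝ qf3 x)) = 2 * (c 0 * x 0 + c 1 * x 1 - c 2 * x 2) := by
  have hp (j : Fin 3) : HasFDerivAt (fun y : Fin 3 → ℝ => y j ^ 2) _ x :=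
    (hasFDerivAt_apply (𝕜 := ℝ) j x).pow 2
  have hq : HasFDerivAt qf3 _ x := ((hp 0).add (hp 1)).sub (hp 2)
  rw [hq.fderiv]
  simp only [coordOp_apply, Fin.sum_univ_three, Nat.add_one_sub_one, pow_one, nsmul_eq_mul,
    comp_sub, comp_add, comp_smulₛₗ, ringHom_apply, sub_apply, add_apply, smul_apply, comp_apply,
    proj_apply, Pi.single_eq_same, Pi.single_eq_of_ne, ne_eq, Fin.reduceEq, not_false_eq_true,
    ofRealCLM_apply, real_smul, ofReal_mul, ofReal_one, ofReal_zero, ofReal_natCast]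
  ring

theorem coordOp_fderiv_ofReal_add_mul (c : Fin 3 → ℂ) (a : ℂ) (x : Fin 3 → ℝ) :
    coordOp c (fderiv ℝ (fun y : Fin 3 → ℝ => (y 0 : ℂ) + a * y 1) x) = c 0 + a * c 1 := by
  have hc (j : Fin 3) : HasFDerivAt (fun y : Fin 3 → ℝ => (y j : ℂ)) _ x :=
    ofRealCLM.hasFDerivAt.comp x (hasFDerivAt_apply j x)
  have hz : HasFDerivAt (fun y : Fin 3 → ℝ => (y 0 : ℂ) + a * y 1) _ x :=
    (hc 0).add ((hc 1).const_mul a)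
  rw [hz.fderiv]
  simp only [coordOp_apply, Fin.sum_univ_three, add_apply, smul_apply, comp_apply, proj_apply,
    Pi.single_eq_same, Pi.single_eq_of_ne, ne_eq, Fin.reduceEq, not_false_eq_true,
    ofRealCLM_apply, ofReal_one, ofReal_zero, smul_eq_mul]
  ring

noncomputable def rsProfile (k : ℕ) (s : ℝ) : ℝ := s ^ ((k : ℝ) - 1 / 2) * Real.exp (-π * s)

noncomputable def rsFun (k : ℕ) (a : ℂ) (y : Fin 3 → ℝ) : ℂ :=
  ((y 0 : ℂ) + a * y 1) ^ (-(k : ℤ)) * (rsProfile k (qf3 y) : ℂ)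

theorem rsPlus_eq_rsFun (k : ℕ) : rsPlus k = rsFun k (-I) := by
  funext y
  simp only [rsPlus, rsFun, rsProfile, ofReal_mul, neg_mul, sub_eq_add_neg, mul_assoc]

theorem rsMinus_eq_rsFun (k : ℕ) : rsMinus k = rsFun k I := by
  funext y
  simp only [rsMinus, rsFun, rsProfile, ofReal_mul, mul_assoc]

theorem coordOp_fderiv_rsFun {k : ℕ} {a μ : ℂ} {c : Fin 3 → ℂ} {x : Fin 3 → ℝ}
    (hS : 0 < qf3 x) (hz : (x 0 : ℂ) + a * x 1 ≠ 0)
    (hc : c 0 + a * c 1 = μ * ((x 0 : ℂ) + a * x 1))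
    (hcS : c 0 * x 0 + c 1 * x 1 - c 2 * x 2 = 0) :
    coordOp c (fderiv ℝ (rsFun k a) x) = -k * μ * rsFun k a x := by
  have hprofile : DifferentiableAt ℝ (rsProfile k) (qf3 x) :=
    (Real.differentiableAt_rpow_const_of_ne _ hS.ne').mul (by fun_prop)
  have := apply_fderiv_zpow_mul_ofReal_comp (coordOp c)
    (z := fun y => (y 0 : ℂ) + a * y 1) (m := -(k : ℤ)) (by fun_prop) hz
    (by unfold qf3; fun_prop) hprofile
    (by rw [coordOp_fderiv_ofReal_add_mul, hc]) (by rw [coordOp_fderiv_qf3, hcS, mul_zero])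
  push_cast at this
  exact this

theorem H0op_eq_coordOp (φ : (Fin 3 → ℝ) → ℂ) (x : Fin 3 → ℝ) :
    H0op φ x = coordOp ![2 * I * x 1, -2 * I * x 0, 0] (fderiv ℝ φ x) := by
  simp only [H0op, pdC, coordOp_apply, Fin.sum_univ_three, Matrix.cons_val]
  ring

theorem Yminus_eq_coordOp (φ : (Fin 3 → ℝ) → ℂ) (x : Fin 3 → ℝ) :
    Yminus φ x = coordOp ![-x 2, I * x 2, -(x 0 - I * x 1)] (fderiv ℝ φ x) := by
  simp only [Yminus, pdC, coordOp_apply, Fin.sum_univ_three, Matrix.cons_val]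
  ring

theorem Yplus_eq_coordOp (φ : (Fin 3 → ℝ) → ℂ) (x : Fin 3 → ℝ) :
    Yplus φ x = coordOp ![-x 2, -(I * x 2), -(x 0 + I * x 1)] (fderiv ℝ φ x) := by
  simp only [Yplus, pdC, coordOp_apply, Fin.sum_univ_three, Matrix.cons_val]
  ring

theorem rallis_schiffmann_weights_general (k : ℕ) (x : Fin 3 → ℝ)
    (hS : 0 < qf3 x) (hx : ¬(x 0 = 0 ∧ x 1 = 0)) :
    H0op (rsPlus k) x = 2 * (k : ℂ) * rsPlus k x ∧
    H0op (rsMinus k) x = -2 * (k : ℂ) * rsMinus k x ∧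
    Yminus (rsPlus k) x = 0 ∧
    Yplus (rsMinus k) x = 0 := by
  have hplus : (x 0 : ℂ) + -I * x 1 ≠ 0 := fun h => hx (by simpa [Complex.ext_iff] using h)
  have hminus : (x 0 : ℂ) + I * x 1 ≠ 0 := fun h => hx (by simpa [Complex.ext_iff] using h)
  rw [rsPlus_eq_rsFun, rsMinus_eq_rsFun, H0op_eq_coordOp, H0op_eq_coordOp, Yminus_eq_coordOp,
    Yplus_eq_coordOp]
  refine ⟨?_, ?_, ?_, ?_⟩
  · rw [coordOp_fderiv_rsFun (μ := -2) hS hplus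
      (by simp only [Matrix.cons_val]; linear_combination (2 * x 0 : ℂ) * I_sq)
      (by simp only [Matrix.cons_val]; ring)]
    ring
  · rw [coordOp_fderiv_rsFun (μ := 2) hS hminus
      (by simp only [Matrix.cons_val]; linear_combination (-2 * x 0 : ℂ) * I_sq)
      (by simp only [Matrix.cons_val]; ring)]
    ring
  · rw [coordOp_fderiv_rsFun (μ := 0) hS hplus
      (by simp only [Matrix.cons_val]; linear_combination (-x 2 : ℂ) * I_sq)
      (by simp only [Matrix.cons_val]; ring)]
    ring
  · rw [coordOp_fderiv_rsFun (μ := 0) hS hminus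
      (by simp only [Matrix.cons_val]; linear_combination (-x 2 : ℂ) * I_sq)
      (by simp only [Matrix.cons_val]; ring)]
    ring

/-- On the region `S(x) > 0`, `(x₁,x₂) ≠ 0`, one has `Ĥ₀φ^k_± = ±2kφ^k_±`, `Ŷ₋φ^k₊ = 0`,
and `Ŷ₊φ^k₋ = 0`. -/
theorem rallis_schiffmann_weights (k : ℕ) (hk : 1 ≤ k) (x : Fin 3 → ℝ)
    (hS : 0 < qf3 x) (hx : ¬(x 0 = 0 ∧ x 1 = 0)) :
    H0op (rsPlus k) x = 2 * (k : ℂ) * rsPlus k x ∧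
    H0op (rsMinus k) x = -2 * (k : ℂ) * rsMinus k x ∧
    Yminus (rsPlus k) x = 0 ∧
    Yplus (rsMinus k) x = 0 :=
  rallis_schiffmann_weights_general k x hS hx
end
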